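/- arXiv:2504.09784 — 3 statements merged into one kernel-verified Lean document; each statement's English description precedes it below -/
import Mathlib

section
/- Let q : ℝ^m → ℝ^n be differentiable and Jacobian sign-stable with Jacobian bounds J̲ ≤ J_q(z) ≤ J̄. Define for each component i the diagonal 0–1 matrix D^i = diag(max(sgn((J̄)_i), 0)) (where (J̄)_i is the i-th row) and q_{d,i}(z₁, z₂) := q_i(D^i z₁ + (I − D^i) z₂). Then q_d is a mixed-monotone decomposition function for q: q_d(z,z) = q(z), q_d is componentwise increasing in its first argument, and componentwise decreasing in its second argument. -/
private lemma seg_deriv {m : ℕ} (x y : Fin m → ℝ) (t : ℝ) :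
    HasDerivAt (fun t : ℝ => (fun j => x j + t * (y j - x j))) (fun j => y j - x j) t := by
  rw [hasDerivAt_pi]
  intro j
  simpa using ((hasDerivAt_id t).mul_const (y j - x j)).const_add (x j)

private lemma key_mono {m n : ℕ}
    (q : (Fin m → ℝ) → (Fin n → ℝ))
    (J : (Fin m → ℝ) → Matrix (Fin n) (Fin m) ℝ)
    (hderiv : ∀ z,
      HasFDerivAt q (LinearMap.toContinuousLinearMap (Matrix.mulVecLin (J z))) z)
    (i : Fin n) (x y : Fin m → ℝ) (hxy : x ≤ y)
    (hs : ∀ z j, x j ≠ y j → 0 ≤ J z i j) : q x i ≤ q y i := by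
  set γ : ℝ → Fin m → ℝ := fun t j => x j + t * (y j - x j) with hγdef
  have hF : ∀ t, HasDerivAt (fun t => q (γ t) i)
      ((J (γ t)).mulVec (fun j => y j - x j) i) t := by
    intro t
    have h1 := (hderiv (γ t)).comp_hasDerivAt t (seg_deriv x y t)
    have h2 := hasDerivAt_pi.mp h1 i
    simpa [Matrix.mulVecLin] using h2
  have hdiff : Differentiable ℝ (fun t => q (γ t) i) := fun t => (hF t).differentiableAt
  have hmono : Monotone (fun t => q (γ t) i) := by
    apply monotone_of_deriv_nonneg hdiff
    intro t
    rw [(hF t).deriv]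
    simp only [Matrix.mulVec, dotProduct]
    apply Finset.sum_nonneg
    intro j _
    by_cases h : x j = y j
    · simp [h]
    · exact mul_nonneg (hs _ j h) (sub_nonneg.mpr (hxy j))
  have h0 : γ 0 = x := by funext j; simp [hγdef]
  have h1 : γ 1 = y := by funext j; simp [hγdef]
  have := hmono (by norm_num : (0:ℝ) ≤ 1)
  simpa [h0, h1] using this

private lemma key_anti {m n : ℕ}
    (q : (Fin m → ℝ) → (Fin n → ℝ))
    (J : (Fin m → ℝ) → Matrix (Fin n) (Fin m) ℝ)
    (hderiv : ∀ z,
      HasFDerivAt q (LinearMap.toContinuousLinearMap (Matrix.mulVecLin (J z))) z)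
    (i : Fin n) (x y : Fin m → ℝ) (hxy : x ≤ y)
    (hs : ∀ z j, x j ≠ y j → J z i j ≤ 0) : q y i ≤ q x i := by
  set γ : ℝ → Fin m → ℝ := fun t j => x j + t * (y j - x j) with hγdef
  have hF : ∀ t, HasDerivAt (fun t => q (γ t) i)
      ((J (γ t)).mulVec (fun j => y j - x j) i) t := by
    intro t
    have h1 := (hderiv (γ t)).comp_hasDerivAt t (seg_deriv x y t)
    have h2 := hasDerivAt_pi.mp h1 i
    simpa [Matrix.mulVecLin] using h2
  have hdiff : Differentiable ℝ (fun t => q (γ t) i) := fun t => (hF t).differentiableAt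
  have hanti : Antitone (fun t => q (γ t) i) := by
    apply antitone_of_deriv_nonpos hdiff
    intro t
    rw [(hF t).deriv]
    simp only [Matrix.mulVec, dotProduct]
    apply Finset.sum_nonpos
    intro j _
    by_cases h : x j = y j
    · simp [h]
    · exact mul_nonpos_of_nonpos_of_nonneg (hs _ j h) (sub_nonneg.mpr (hxy j))
  have h0 : γ 0 = x := by funext j; simp [hγdef]
  have h1 : γ 1 = y := by funext j; simp [hγdef]
  have := hanti (by norm_num : (0:ℝ) ≤ 1)
  simpa [h0, h1] using this

theorem tight_decomposition_is_mixed_monotone {m n : ℕ}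
    (q : (Fin m → ℝ) → (Fin n → ℝ))
    (J : (Fin m → ℝ) → Matrix (Fin n) (Fin m) ℝ)
    (hderiv : ∀ z,
      HasFDerivAt q (LinearMap.toContinuousLinearMap (Matrix.mulVecLin (J z))) z)
    (Jl Ju : Matrix (Fin n) (Fin m) ℝ)
    (hJl : ∀ z i j, Jl i j ≤ J z i j)
    (hJu : ∀ z i j, J z i j ≤ Ju i j)
    -- Jacobian sign-stability, with the sign matching that of J̄ :
    (hJSS : ∀ i j, (0 < Ju i j → ∀ z, 0 ≤ J z i j) ∧ (¬ 0 < Ju i j → ∀ z, J z i j ≤ 0))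
    -- the tight decomposition function
    (qd : (Fin m → ℝ) → (Fin m → ℝ) → (Fin n → ℝ))
    (hqd : ∀ z1 z2 i, qd z1 z2 i =
      q (fun j => (if 0 < Ju i j then (1:ℝ) else 0) * z1 j
            + (1 - (if 0 < Ju i j then (1:ℝ) else 0)) * z2 j) i) :
    (∀ z, qd z z = q z) ∧
    (∀ z1 z1' z2, z1 ≤ z1' → qd z1 z2 ≤ qd z1' z2) ∧
    (∀ z1 z2 z2', z2 ≤ z2' → qd z1 z2' ≤ qd z1 z2) := by
  refine ⟨?_, ?_, ?_⟩
  · intro z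
    funext i
    rw [hqd]
    congr 1
    funext j
    ring
  · intro z1 z1' z2 h i
    rw [hqd, hqd]
    apply key_mono q J hderiv i
    · intro j
      by_cases hc : 0 < Ju i j
      · simp only [hc, if_true]
        have := h j
        nlinarith
      · simp [hc]
    · intro z j hne
      by_cases hc : 0 < Ju i j
      · exact (hJSS i j).1 hc z
      · exfalso; apply hne; simp [hc]
  · intro z1 z2 z2' h i
    rw [hqd, hqd]
    apply key_anti q J hderiv i
    · intro j
      by_cases hc : 0 < Ju i j
      · simp [hc]
      · simp only [hc, if_false]
        have := h j
        nlinarith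
    · intro z j hne
      by_cases hc : 0 < Ju i j
      · exfalso; apply hne; simp [hc]
      · exact (hJSS i j).2 hc z
end

section
/- Let q : ℝ^m → ℝ^n be differentiable and Jacobian sign-stable with Jacobian bounds J̲ ≤ J_q(z) ≤ J̄, and let q_d be the tight decomposition function q_{d,i}(z₁,z₂) = q_i(D^i z₁ + (I − D^i) z₂). Then for any interval [z̲, z̄], the decomposition error satisfies δ := q_d(z̲, z̄) − q_d(z̄, z̲) and |δ| ≤ F_q (z̄ − z̲) componentwise, where F_q := J̄⁺ + J̲⁻ (elementwise positive part of J̄ plus elementwise negative part of J̲). -/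
theorem tight_decomposition_error_bound {m n : ℕ}
    (q : (Fin m → ℝ) → (Fin n → ℝ))
    (J : (Fin m → ℝ) → Matrix (Fin n) (Fin m) ℝ)
    (hderiv : ∀ z,
      HasFDerivAt q (LinearMap.toContinuousLinearMap (Matrix.mulVecLin (J z))) z)
    (Jl Ju : Matrix (Fin n) (Fin m) ℝ)
    (hJl : ∀ z i j, Jl i j ≤ J z i j)
    (hJu : ∀ z i j, J z i j ≤ Ju i j)
    (hJSS : ∀ i j, (0 < Ju i j → ∀ z, 0 ≤ J z i j) ∧ (¬ 0 < Ju i j → ∀ z, J z i j ≤ 0))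
    (qd : (Fin m → ℝ) → (Fin m → ℝ) → (Fin n → ℝ))
    (hqd : ∀ z1 z2 i, qd z1 z2 i =
      q (fun j => (if 0 < Ju i j then (1:ℝ) else 0) * z1 j
            + (1 - (if 0 < Ju i j then (1:ℝ) else 0)) * z2 j) i)
    -- F_q := J̄⁺ + J̲⁻
    (Fq : Matrix (Fin n) (Fin m) ℝ)
    (hFq : ∀ i j, Fq i j = max (Ju i j) 0 + max (-(Jl i j)) 0)
    (zl zu : Fin m → ℝ) (hzl : zl ≤ zu) :
    ∀ i, |qd zl zu i - qd zu zl i| ≤ Fq.mulVec (zu - zl) i := by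
  intro i
  set x : Fin m → ℝ := fun j => (if 0 < Ju i j then (1:ℝ) else 0) * zl j
      + (1 - (if 0 < Ju i j then (1:ℝ) else 0)) * zu j with hxdef
  set y : Fin m → ℝ := fun j => (if 0 < Ju i j then (1:ℝ) else 0) * zu j
      + (1 - (if 0 < Ju i j then (1:ℝ) else 0)) * zl j with hydef
  rw [hqd zl zu i, hqd zu zl i]
  show |q x i - q y i| ≤ Fq.mulVec (zu - zl) i
  set C := Fq.mulVec (zu - zl) i with hC
  have hbound : ∀ z : Fin m → ℝ, |(J z).mulVec (x - y) i| ≤ C := by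
    intro z
    have heq : (J z).mulVec (x - y) i = ∑ j, J z i j * (x j - y j) := by
      simp [Matrix.mulVec, dotProduct, mul_sub, Finset.sum_sub_distrib]
    rw [heq]
    have hterm : ∀ j, |J z i j * (x j - y j)| ≤ Fq i j * (zu j - zl j) := by
      intro j
      have he : 0 ≤ zu j - zl j := sub_nonneg.2 (hzl j)
      rw [hFq i j, abs_mul]
      by_cases hpos : 0 < Ju i j
      · have hJ0 : 0 ≤ J z i j := (hJSS i j).1 hpos z
        have hxy : x j - y j = zl j - zu j := by simp [hxdef, hydef, hpos]
        rw [hxy, abs_of_nonneg hJ0, abs_sub_comm, abs_of_nonneg he]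
        have h1 : J z i j ≤ max (Ju i j) 0 + max (-(Jl i j)) 0 :=
          le_add_of_le_of_nonneg (le_trans (hJu z i j) (le_max_left _ _)) (le_max_right _ _)
        exact mul_le_mul_of_nonneg_right h1 he
      · have hJ0 : J z i j ≤ 0 := (hJSS i j).2 hpos z
        have hxy : x j - y j = zu j - zl j := by simp [hxdef, hydef, hpos]
        rw [hxy, abs_of_nonpos hJ0, abs_of_nonneg he]
        have h1 : -J z i j ≤ max (Ju i j) 0 + max (-(Jl i j)) 0 :=
          le_add_of_nonneg_of_le (le_max_right _ _)
            (le_trans (neg_le_neg (hJl z i j)) (le_max_left _ _))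
        exact mul_le_mul_of_nonneg_right h1 he
    calc |∑ j, J z i j * (x j - y j)| ≤ ∑ j, |J z i j * (x j - y j)| :=
          Finset.abs_sum_le_sum_abs _ _
      _ ≤ ∑ j, Fq i j * (zu j - zl j) := Finset.sum_le_sum fun j _ => hterm j
      _ = C := by simp [hC, Matrix.mulVec, dotProduct, mul_sub, Finset.sum_sub_distrib]
  have hder : ∀ t ∈ (Set.univ : Set ℝ), HasDerivWithinAt (fun t : ℝ => q (y + t • (x - y)) i)
      ((J (y + t • (x - y))).mulVec (x - y) i) Set.univ t := by
    intro t _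
    have h1 : HasDerivAt (fun t : ℝ => y + t • (x - y)) (x - y) t := by
      simpa using ((hasDerivAt_id t).smul_const (x - y)).const_add y
    have h2 := (hderiv (y + t • (x - y))).comp_hasDerivAt t h1
    have h3 := (ContinuousLinearMap.proj (R := ℝ) (φ := fun _ : Fin n => ℝ) i).hasFDerivAt.comp_hasDerivAt t h2
    exact h3.hasDerivWithinAt
  have := Convex.norm_image_sub_le_of_norm_hasDerivWithin_le hder
    (fun t _ => by simpa [Real.norm_eq_abs] using hbound (y + t • (x - y)))
    convex_univ (Set.mem_univ (0:ℝ)) (Set.mem_univ (1:ℝ))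
  simpa [Real.norm_eq_abs] using this
end

section
/- With h̲(z) := max_{t∈{0,…,T−1}}(d̲_t − κ‖z − z̃_t‖) − ε and h̄(z) := min_{t∈{0,…,T−1}}(d̄_t + κ‖z − z̃_t‖) + ε, and with h̲* := max over the box [z̲,z̄] of h̲ and h̄* := min over the box of h̄, the gap satisfies h̄* − h̲* ≤ (d̄_0 − d̲_0) + κ‖z̄ − z̲‖ + 2ε, where z̃_0 is the midpoint of [z̲, z̄]. -/
noncomputable def enorm11 {n : ℕ} (x : Fin n → ℝ) : ℝ := Real.sqrt (∑ i, (x i) ^ 2)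

lemma enorm11_nonneg {n : ℕ} (x : Fin n → ℝ) : 0 ≤ enorm11 x := Real.sqrt_nonneg _

lemma enorm11_sub_self {n : ℕ} (x : Fin n → ℝ) : enorm11 (x - x) = 0 := by
  simp [enorm11]

lemma add_div_two_mem_Icc {ι : Type*} {a b : ι → ℝ} (hab : a ≤ b) :
    (fun i => (a i + b i) / 2) ∈ Set.Icc a b :=
  ⟨fun i => by linarith [hab i], fun i => by linarith [hab i]⟩

section Envelopes

variable {E ι : Type*} [Finite ι] (a : ι → ℝ) (p : E → ι → ℝ) (c : ℝ)
  {S : Set E} {z : E}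

lemma csInf_image_iInf_add_le [Nonempty ι] (hp : ∀ z t, 0 ≤ p z t) (hz : z ∈ S)
    (t : ι) :
    sInf ((fun z => (⨅ s, a s + p z s) + c) '' S) ≤ a t + p z t + c := by
  have hbdd : BddBelow ((fun z => (⨅ s, a s + p z s) + c) '' S) := by
    refine ⟨(⨅ s, a s) + c, ?_⟩
    rintro _ ⟨y, -, rfl⟩
    dsimp only
    gcongr ?_ + c
    exact ciInf_mono (Set.finite_range a).bddBelow fun s => le_add_of_nonneg_right (hp y s)
  calc sInf ((fun z => (⨅ s, a s + p z s) + c) '' S)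
      ≤ (⨅ s, a s + p z s) + c := csInf_le hbdd (Set.mem_image_of_mem _ hz)
    _ ≤ a t + p z t + c := by
      gcongr
      exact ciInf_le (Set.finite_range _).bddBelow t

lemma le_csSup_image_iSup_sub [Nonempty ι] (hp : ∀ z t, 0 ≤ p z t) (hz : z ∈ S) (t : ι) :
    a t - p z t - c ≤ sSup ((fun z => (⨆ s, a s - p z s) - c) '' S) := by
  have hbdd : BddAbove ((fun z => (⨆ s, a s - p z s) - c) '' S) := by
    refine ⟨(⨆ s, a s) - c, ?_⟩
    rintro _ ⟨y, -, rfl⟩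
    dsimp only
    gcongr ?_ - c
    exact ciSup_mono (Set.finite_range a).bddAbove fun s => sub_le_self _ (hp y s)
  calc a t - p z t - c ≤ (⨆ s, a s - p z s) - c := by
        gcongr
        exact le_ciSup (Set.finite_range (fun s => a s - p z s)).bddAbove t
    _ ≤ sSup ((fun z => (⨆ s, a s - p z s) - c) '' S) :=
      le_csSup hbdd (Set.mem_image_of_mem _ hz)

end Envelopes

theorem abstraction_gap_bound_general {nz T : ℕ} (hT : 0 < T) (κ ε : ℝ) (hκ : 0 < κ)
    (ztil : Fin T → (Fin nz → ℝ)) (dl du : Fin T → ℝ)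
    (zl zu : Fin nz → ℝ) (hle : zl ≤ zu)
    (hmid : ∀ hT0 : 0 < T, ztil ⟨0, hT0⟩ = fun i => (zl i + zu i) / 2) :
    sInf ((fun z => (⨅ t, du t + κ * enorm11 (z - ztil t)) + ε) '' {z | zl ≤ z ∧ z ≤ zu})
      - sSup ((fun z => (⨆ t, dl t - κ * enorm11 (z - ztil t)) - ε) '' {z | zl ≤ z ∧ z ≤ zu})
      ≤ (du ⟨0, hT⟩ - dl ⟨0, hT⟩) + κ * enorm11 (zu - zl) + 2 * ε := by
  have : Nonempty (Fin T) := ⟨⟨0, hT⟩⟩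
  have hp (z : Fin nz → ℝ) (t : Fin T) : 0 ≤ κ * enorm11 (z - ztil t) :=
    mul_nonneg hκ.le (enorm11_nonneg _)
  -- Evaluate both envelopes at the midpoint `ztil 0`, where the `t = 0` penalty vanishes.
  have hmem : ztil ⟨0, hT⟩ ∈ {z | zl ≤ z ∧ z ≤ zu} :=
    hmid hT ▸ add_div_two_mem_Icc hle
  have hupper :=
    csInf_image_iInf_add_le du (fun z t => κ * enorm11 (z - ztil t)) ε hp hmem ⟨0, hT⟩
  have hlower :=
    le_csSup_image_iSup_sub dl (fun z t => κ * enorm11 (z - ztil t)) ε hp hmem ⟨0, hT⟩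
  rw [enorm11_sub_self, mul_zero] at hupper hlower
  linarith [mul_nonneg hκ.le (enorm11_nonneg (zu - zl))]

theorem abstraction_gap_bound {nz T : ℕ} (hT : 0 < T) (κ ε : ℝ) (hκ : 0 < κ) (hε : 0 ≤ ε)
    (ztil : Fin T → (Fin nz → ℝ)) (dl du : Fin T → ℝ)
    (zl zu : Fin nz → ℝ) (hle : zl ≤ zu)
    (hmid : ∀ hT0 : 0 < T, ztil ⟨0, hT0⟩ = fun i => (zl i + zu i) / 2) :
    sInf ((fun z => (⨅ t, du t + κ * enorm11 (z - ztil t)) + ε) '' {z | zl ≤ z ∧ z ≤ zu})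
      - sSup ((fun z => (⨆ t, dl t - κ * enorm11 (z - ztil t)) - ε) '' {z | zl ≤ z ∧ z ≤ zu})
      ≤ (du ⟨0, hT⟩ - dl ⟨0, hT⟩) + κ * enorm11 (zu - zl) + 2 * ε :=
  abstraction_gap_bound_general hT κ ε hκ ztil dl du zl zu hle hmid
end
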